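/- The block coefficient C_B(β) = 1/2 + β/(3(β+1)) − log(β+1)/(2β) is strictly increasing in β on (0, ∞). -/

import Mathlib

/-!
Differentiating gives `C_B'(β) = 1/(3(β+1)²) + (log(β+1) - β/(β+1))/(2β²)`. The first term is
positive and the second is nonnegative by the elementary bound `log(1+β) ≥ β/(1+β)`, i.e.
`log y ≥ 1 - 1/y` at `y = 1 + β`.
-/

open Real Set

noncomputable def blockCoefficient (β : ℝ) : ℝ :=
  1/2 + β/(3*(β+1)) - log (β+1)/(2*β)

lemma div_add_one_le_log_add_one {x : ℝ} (hx : -1 < x) : x / (x + 1) ≤ log (x + 1) := by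
  have hx1 : 0 < x + 1 := by linarith
  calc x / (x + 1) = 1 - (x + 1)⁻¹ := by field_simp; ring
    _ ≤ log (x + 1) := one_sub_inv_le_log_of_pos hx1

lemma hasDerivAt_blockCoefficient {x : ℝ} (hx : 0 < x) :
    HasDerivAt blockCoefficient
      (1/(3*(x+1)^2) + (log (x+1) - x/(x+1))/(2*x^2)) x := by
  have hx1 : 0 < x + 1 := by linarith
  have hfrac : HasDerivAt (fun β : ℝ => β/(3*(β+1))) ((1*(3*(x+1)) - x*3)/(3*(x+1))^2) x := by
    have hden : HasDerivAt (fun β : ℝ => 3*(β+1)) 3 x := by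
      simpa using ((hasDerivAt_id x).add_const 1).const_mul 3
    exact (hasDerivAt_id x).div hden (by positivity)
  have hlogfrac : HasDerivAt (fun β : ℝ => log (β+1)/(2*β))
      (((x+1)⁻¹*(2*x) - log (x+1)*2)/(2*x)^2) x := by
    have hlog : HasDerivAt (fun β : ℝ => log (β+1)) (x+1)⁻¹ x := by
      simpa using ((hasDerivAt_id x).add_const 1).log hx1.ne'
    have hden : HasDerivAt (fun β : ℝ => 2*β) 2 x := by
      simpa using (hasDerivAt_id x).const_mul 2
    exact hlog.div hden (by positivity)
  refine ((hfrac.const_add (1/2)).sub hlogfrac).congr_deriv ?_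
  field_simp
  ring

lemma blockCoefficient_deriv_pos {x : ℝ} (hx : 0 < x) :
    0 < 1/(3*(x+1)^2) + (log (x+1) - x/(x+1))/(2*x^2) := by
  have hlog : 0 ≤ log (x+1) - x/(x+1) := sub_nonneg.2 (div_add_one_le_log_add_one (by linarith))
  positivity

/-- The block coefficient `C_B(β)` is strictly increasing on `(0, ∞)`. -/
theorem block_coefficient_strictMono :
    StrictMonoOn (fun β : ℝ => 1/2 + β/(3*(β+1)) - Real.log (β+1)/(2*β))
      (Set.Ioi (0:ℝ)) := by
  change StrictMonoOn blockCoefficient (Ioi 0)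
  refine strictMonoOn_of_deriv_pos (convex_Ioi 0)
    (fun x hx => (hasDerivAt_blockCoefficient hx).continuousAt.continuousWithinAt) fun x hx => ?_
  rw [interior_Ioi] at hx
  rw [(hasDerivAt_blockCoefficient hx).deriv]
  exact blockCoefficient_deriv_pos hx
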